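/- arXiv:0711.0436 — 2 statements merged into one kernel-verified Lean document; each statement's English description precedes it below -/
import Mathlib

section
/- Let Q be a ∂_F-delta operator with ∂_F-basic sequence (q_n)_{n≥0}, let S ∈ Σ_F be invertible in Σ_F, and let s_n = S^{−1} q_n be its sequence of Sheffer F-polynomials. Then S^{−1} = Σ_{k≥0} (s_k(0)/F_k!) Q^k, where s_k(0) ∈ K is the value of s_k at 0 and the operator sum is finite on each polynomial. -/
open Polynomial Finset

/-- F-factorial: `Ffact n = F_n · F_{n-1} ··· F_1`, with `Ffact 0 = 1`. -/
def Ffact (n : ℕ) : ℕ := ∏ i ∈ Finset.range n, Nat.fib (i + 1)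

/-- Fibonomial coefficient `C_F(n,k) = F_n!/(F_k!·F_{n−k}!)`, taken in a field `K`. -/
noncomputable def fibnom (K : Type*) [Field K] (n k : ℕ) : K :=
  (Ffact n : K) / ((Ffact k : K) * (Ffact (n - k) : K))

variable (K : Type*) [Field K] [CharZero K]

/-- The F-derivative `∂_F`, the linear operator with `∂_F x^n = F_n x^{n-1}`. -/
noncomputable def fderivF : Module.End K (Polynomial K) :=
  Polynomial.lsum fun n => (Nat.fib n : K) • (Polynomial.monomial (n - 1) : K →ₗ[K] Polynomial K)

/-- The F-translation operator `E^y(∂_F) = Σ_{k≥0} (y^k/F_k!) ∂_F^k`; since `∂_F`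
strictly decreases degree, the sum truncated at `natDegree p + 1` is the full sum. -/
noncomputable def Etrans (y : K) (p : Polynomial K) : Polynomial K :=
  ∑ k ∈ Finset.range (p.natDegree + 1), (y ^ k / (Ffact k : K)) • ((fderivF K ^ k) p)

/-- A linear operator on `K[x]` is `∂_F`-shift invariant iff it commutes with every
F-translation operator `E^y(∂_F)`. -/
def ShiftInv (T : Module.End K (Polynomial K)) : Prop :=
  ∀ (y : K) (p : Polynomial K), T (Etrans K y p) = Etrans K y (T p)

/-- A `∂_F`-delta operator: a `∂_F`-shift invariant operator `Q` with `Q x` a nonzero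
constant. -/
def DeltaOp (Q : Module.End K (Polynomial K)) : Prop :=
  ShiftInv K Q ∧ ∃ c : K, c ≠ 0 ∧ Q Polynomial.X = Polynomial.C c

/-- `(q_n)` is the `∂_F`-basic polynomial sequence of `Q`. -/
def BasicSeq (Q : Module.End K (Polynomial K)) (q : ℕ → Polynomial K) : Prop :=
  (∀ n : ℕ, (q n).degree = n) ∧ q 0 = 1 ∧ (∀ n : ℕ, 1 ≤ n → (q n).eval 0 = 0) ∧
    ∀ n : ℕ, 1 ≤ n → Q (q n) = (Nat.fib n : K) • q (n - 1)

/-- The operator `x̂_F`, with `x̂_F x^n = ((n+1)/F_{n+1}) x^{n+1}`. -/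
noncomputable def xF : Module.End K (Polynomial K) :=
  Polynomial.lsum fun n =>
    (((n : K) + 1) / (Nat.fib (n + 1) : K)) • (Polynomial.monomial (n + 1) : K →ₗ[K] Polynomial K)

/-- The Graves–Pincherle F-derivative `T' = T∘x̂_F − x̂_F∘T`. -/
noncomputable def GPderiv (T : Module.End K (Polynomial K)) : Module.End K (Polynomial K) :=
  T * xF K - xF K * T

/-- `T = Σ_{k≥0} (a_k/F_k!) Q^k`, expressed via truncations: since a delta operator `Q`
strictly decreases degree, `Q^k p = 0` for `k > natDegree p`, so the truncated sums agree. -/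
def OpSumRep (Q : Module.End K (Polynomial K)) (a : ℕ → K) (T : Module.End K (Polynomial K)) : Prop :=
  ∀ (p : Polynomial K) (N : ℕ), p.natDegree < N →
    T p = ∑ k ∈ Finset.range N, (a k / (Ffact k : K)) • ((Q ^ k) p)

/-- `(s_n)` is a sequence of Sheffer F-polynomials of `Q`. -/
def ShefferSeq (Q : Module.End K (Polynomial K)) (s : ℕ → Polynomial K) : Prop :=
  (∀ n : ℕ, (s n).degree = n) ∧ (∃ c : K, c ≠ 0 ∧ s 0 = Polynomial.C c) ∧
    ∀ n : ℕ, 1 ≤ n → Q (s n) = (Nat.fib n : K) • s (n - 1)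

set_option linter.unusedSectionVars false
set_option linter.unusedVariables false
set_option maxHeartbeats 1000000

lemma Ffact_pos (n : ℕ) : 0 < Ffact n := by
  apply Finset.prod_pos; intro i _; exact Nat.fib_pos.2 (Nat.succ_pos i)

lemma Ffact_ne_zero (n : ℕ) : (Ffact n : K) ≠ 0 := by
  exact_mod_cast (Ffact_pos n).ne'

lemma Ffact_succ (n : ℕ) : Ffact (n+1) = Ffact n * Nat.fib (n+1) :=
  Finset.prod_range_succ _ n

lemma fderivF_monomial (n : ℕ) (a : K) :
    fderivF K (monomial n a) = (Nat.fib n : K) • monomial (n-1) a := by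
  simp [fderivF, Polynomial.lsum_apply, Polynomial.sum_monomial_index]

lemma coeff_fderivF (p : Polynomial K) (m : ℕ) :
    (fderivF K p).coeff m = (Nat.fib (m+1) : K) * p.coeff (m+1) := by
  induction p using Polynomial.induction_on' with
  | add p q hp hq => simp [hp, hq, mul_add]
  | monomial n a =>
    rw [fderivF_monomial]
    simp only [coeff_smul, coeff_monomial, smul_eq_mul]
    rcases eq_or_ne n (m+1) with h | h
    · subst h; simp
    · rw [if_neg h]
      rcases eq_or_ne (n-1) m with h2 | h2
      · rw [if_pos h2]
        have hn : n = 0 := by omega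
        subst hn; simp
      · rw [if_neg h2, mul_zero, mul_zero]

def Gnat (n k : ℕ) : ℕ := ∏ i ∈ Finset.range k, Nat.fib (n - i)

lemma coeff_fpow (k : ℕ) (p : Polynomial K) (m : ℕ) :
    ((fderivF K ^ k) p).coeff m = (Gnat (m+k) k : K) * p.coeff (m+k) := by
  induction k generalizing p m with
  | zero => simp [Gnat]
  | succ k ih =>
    rw [pow_succ, Module.End.mul_apply, ih, coeff_fderivF]
    have : Gnat (m+(k+1)) (k+1) = Gnat (m+k) k * Nat.fib (m+k+1) := by
      unfold Gnat
      rw [Finset.prod_range_succ']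
      have h1 : ∀ i ∈ Finset.range k, Nat.fib (m + (k+1) - (i+1)) = Nat.fib (m + k - i) := by
        intro i _; congr 1; omega
      rw [Finset.prod_congr rfl h1]
      congr 1
    rw [this]
    push_cast
    ring_nf

lemma fpow_zero_of_lt {p : Polynomial K} {k : ℕ} (h : p.natDegree < k) :
    (fderivF K ^ k) p = 0 := by
  ext m
  rw [coeff_fpow, Polynomial.coeff_eq_zero_of_natDegree_lt (by omega), mul_zero, coeff_zero]

lemma natDegree_fpow_le (k : ℕ) (p : Polynomial K) :
    ((fderivF K ^ k) p).natDegree ≤ p.natDegree := by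
  rw [Polynomial.natDegree_le_iff_coeff_eq_zero]
  intro m hm
  rw [coeff_fpow, Polynomial.coeff_eq_zero_of_natDegree_lt (by omega), mul_zero]

lemma Gnat_nn (n : ℕ) : Gnat n n = Ffact n := by
  unfold Gnat Ffact
  rw [← Finset.prod_range_reflect]
  apply Finset.prod_congr rfl
  intro i hi
  simp only [Finset.mem_range] at hi
  congr 1; omega

lemma fpow_eval0 (k : ℕ) (p : Polynomial K) :
    ((fderivF K ^ k) p).eval 0 = (Ffact k : K) * p.coeff k := by
  rw [← Polynomial.coeff_zero_eq_eval_zero, coeff_fpow, zero_add, Gnat_nn]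

lemma Gnat_eq_zero {n k : ℕ} (h : n < k) : Gnat n k = 0 := by
  apply Finset.prod_eq_zero (Finset.mem_range.mpr h)
  simp

lemma Gnat_mul_Ffact {n k : ℕ} (h : k ≤ n) : Gnat n k * Ffact (n - k) = Ffact n := by
  induction k with
  | zero => simp [Gnat]
  | succ k ih =>
    have hk : k ≤ n := by omega
    have h1 : Ffact (n - k) = Ffact (n - (k+1)) * Nat.fib (n - k) := by
      have e : n - k = (n - (k+1)) + 1 := by omega
      rw [e, Ffact_succ]
    have h2 : Gnat n (k+1) = Gnat n k * Nat.fib (n - k) := Finset.prod_range_succ _ _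
    rw [h2, mul_right_comm, mul_assoc, ← h1, ih hk]

lemma fpow_monomial (k n : ℕ) (a : K) :
    (fderivF K ^ k) (monomial n a) = (Gnat n k : K) • monomial (n - k) a := by
  induction k with
  | zero => simp [Gnat]
  | succ k ih =>
    rw [pow_succ', Module.End.mul_apply, ih, map_smul, fderivF_monomial, smul_smul]
    have h2 : Gnat n (k+1) = Gnat n k * Nat.fib (n - k) := by
      unfold Gnat; exact Finset.prod_range_succ _ _
    have e : n - k - 1 = n - (k+1) := by omega
    rw [e, h2]
    push_cast
    rfl

lemma Etrans_eq {p : Polynomial K} {N : ℕ} (h : p.natDegree < N) (y : K) :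
    Etrans K y p = ∑ k ∈ Finset.range N, (y ^ k / (Ffact k : K)) • ((fderivF K ^ k) p) := by
  unfold Etrans
  apply Finset.sum_subset
  · exact Finset.range_subset_range.mpr (by omega)
  · intro k hk hk2
    simp only [Finset.mem_range] at hk hk2
    rw [fpow_zero_of_lt K (by omega), smul_zero]

lemma scalar_symm {n j : ℕ} (hj : j ≤ n) :
    (Gnat n j : K) / (Ffact j : K) = (Gnat n (n-j) : K) / (Ffact (n-j) : K) := by
  rw [div_eq_div_iff (Ffact_ne_zero K j) (Ffact_ne_zero K (n-j))]
  have h1 : Gnat n j * Ffact (n-j) = Ffact n := Gnat_mul_Ffact hj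
  have h2 : Gnat n (n-j) * Ffact j = Ffact n := by
    have := Gnat_mul_Ffact (Nat.sub_le n j)
    rwa [Nat.sub_sub_self hj] at this
  exact_mod_cast h1.trans h2.symm

lemma sum_symm_monomial {N n : ℕ} (hn : n < N) (a y : K) :
    ∑ k ∈ Finset.range N, (y ^ k / (Ffact k : K)) • ((fderivF K ^ k) (monomial n a))
    = ∑ k ∈ Finset.range N,
        (((fderivF K ^ k) (monomial n a)).eval y / (Ffact k : K)) • (X : Polynomial K) ^ k := by
  have hsub : Finset.range (n+1) ⊆ Finset.range N := Finset.range_subset_range.mpr (by omega)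
  have hL : ∀ k ∈ Finset.range N, k ∉ Finset.range (n+1) →
      (y ^ k / (Ffact k : K)) • ((fderivF K ^ k) (monomial n a)) = 0 := by
    intro k _ hk2
    simp only [Finset.mem_range] at hk2
    rw [fpow_monomial, Gnat_eq_zero (by omega)]
    simp
  have hR : ∀ k ∈ Finset.range N, k ∉ Finset.range (n+1) →
      (((fderivF K ^ k) (monomial n a)).eval y / (Ffact k : K)) • (X : Polynomial K) ^ k = 0 := by
    intro k _ hk2
    simp only [Finset.mem_range] at hk2
    rw [fpow_monomial, Gnat_eq_zero (by omega)]
    simp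
  rw [← Finset.sum_subset hsub hL, ← Finset.sum_subset hsub hR]
  rw [← Finset.sum_range_reflect]
  apply Finset.sum_congr rfl
  intro j hj
  simp only [Finset.mem_range] at hj
  have hj' : j ≤ n := by omega
  have e1 : n + 1 - 1 - j = n - j := by omega
  have e2 : n - (n - j) = j := by omega
  rw [e1, fpow_monomial, fpow_monomial, e2]
  rw [eval_smul, eval_monomial, smul_eq_mul, ← Polynomial.smul_X_eq_monomial, smul_smul, smul_smul]
  congr 1
  have key := scalar_symm K hj'
  have h3 : (Gnat n j : K) * (a * y ^ (n-j)) / (Ffact j : K)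
      = ((Gnat n j : K) / (Ffact j : K)) * (a * y ^ (n-j)) := by ring
  rw [h3, key]
  ring

lemma Etrans_symm {p : Polynomial K} {N : ℕ} (h : p.natDegree < N) (y : K) :
    Etrans K y p = ∑ k ∈ Finset.range N,
      (((fderivF K ^ k) p).eval y / (Ffact k : K)) • (X : Polynomial K) ^ k := by
  rw [Etrans_eq K h y]
  have hp : p = ∑ i ∈ Finset.range N, monomial i (p.coeff i) := Polynomial.as_sum_range' p N h
  set c : ℕ → K := fun i => p.coeff i with hc
  calc ∑ k ∈ Finset.range N, (y ^ k / (Ffact k : K)) • ((fderivF K ^ k) p)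
      = ∑ k ∈ Finset.range N, ∑ i ∈ Finset.range N,
          (y ^ k / (Ffact k : K)) • ((fderivF K ^ k) (monomial i (c i))) := by
        apply Finset.sum_congr rfl
        intro k _
        conv_lhs => rw [hp]
        rw [map_sum, Finset.smul_sum]
    _ = ∑ i ∈ Finset.range N, ∑ k ∈ Finset.range N,
          (y ^ k / (Ffact k : K)) • ((fderivF K ^ k) (monomial i (c i))) := Finset.sum_comm
    _ = ∑ i ∈ Finset.range N, ∑ k ∈ Finset.range N,
          (((fderivF K ^ k) (monomial i (c i))).eval y / (Ffact k : K)) • (X : Polynomial K) ^ k := by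
        apply Finset.sum_congr rfl
        intro i hi
        exact sum_symm_monomial K (Finset.mem_range.mp hi) (c i) y
    _ = ∑ k ∈ Finset.range N, ∑ i ∈ Finset.range N,
          (((fderivF K ^ k) (monomial i (c i))).eval y / (Ffact k : K)) • (X : Polynomial K) ^ k :=
        Finset.sum_comm
    _ = ∑ k ∈ Finset.range N, (((fderivF K ^ k) p).eval y / (Ffact k : K)) • (X : Polynomial K) ^ k := by
        apply Finset.sum_congr rfl
        intro k _
        conv_rhs => rw [hp]
        rw [map_sum, Polynomial.eval_finset_sum]
        rw [Finset.sum_div, Finset.sum_smul]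

lemma eval0_Etrans (y : K) (p : Polynomial K) : (Etrans K y p).eval 0 = p.eval y := by
  unfold Etrans
  rw [Polynomial.eval_finset_sum]
  simp only [eval_smul, fpow_eval0, smul_eq_mul]
  rw [Polynomial.eval_eq_sum_range]
  apply Finset.sum_congr rfl
  intro k _
  have := Ffact_ne_zero K k
  field_simp

lemma expansion {T : Module.End K (Polynomial K)} (hT : ShiftInv K T)
    (p : Polynomial K) (N : ℕ) (h : p.natDegree < N) :
    T p = ∑ k ∈ Finset.range N,
      ((T ((X : Polynomial K) ^ k)).eval 0 / (Ffact k : K)) • ((fderivF K ^ k) p) := by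
  apply Polynomial.funext
  intro y
  have e1 : (T p).eval y = (T (Etrans K y p)).eval 0 := by
    rw [hT y p, eval0_Etrans]
  rw [e1, Etrans_symm K h y, map_sum, Polynomial.eval_finset_sum, Polynomial.eval_finset_sum]
  apply Finset.sum_congr rfl
  intro k _
  rw [map_smul, eval_smul, eval_smul, smul_eq_mul, smul_eq_mul]
  ring

def SRep (c : ℕ → K) (T : Module.End K (Polynomial K)) : Prop :=
  ∀ (p : Polynomial K) (N : ℕ), p.natDegree < N →
    T p = ∑ k ∈ Finset.range N, c k • ((fderivF K ^ k) p)

lemma shiftInv_SRep {T : Module.End K (Polynomial K)} (hT : ShiftInv K T) :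
    SRep K (fun k => (T ((X : Polynomial K) ^ k)).eval 0 / (Ffact k : K)) T :=
  fun p N h => expansion K hT p N h

lemma SRep.natDegree_le {c : ℕ → K} {T : Module.End K (Polynomial K)} (h : SRep K c T)
    (p : Polynomial K) : (T p).natDegree ≤ p.natDegree := by
  rw [h p (p.natDegree + 1) (Nat.lt_succ_self _)]
  apply Polynomial.natDegree_sum_le_of_forall_le
  intro k _
  exact (Polynomial.natDegree_smul_le _ _).trans (natDegree_fpow_le K k p)

lemma double_sum {M : Type*} [AddCommMonoid M] (N : ℕ) (h : ℕ → ℕ → M)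
    (h0 : ∀ k j, N ≤ k + j → h k j = 0) :
    ∑ k ∈ Finset.range N, ∑ j ∈ Finset.range N, h k j
    = ∑ m ∈ Finset.range N, ∑ i ∈ Finset.range (m+1), h i (m - i) := by
  rw [← Finset.sum_product']
  have rhs_eq : ∑ m ∈ Finset.range N, ∑ i ∈ Finset.range (m+1), h i (m - i)
      = ∑ x ∈ (Finset.range N).sigma (fun m => Finset.range (m+1)), h x.2 (x.1 - x.2) :=
    (Finset.sum_sigma (Finset.range N) (fun m => Finset.range (m+1)) (fun x => h x.2 (x.1 - x.2))).symm
  rw [rhs_eq]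
  have step1 : ∑ x ∈ Finset.range N ×ˢ Finset.range N, h x.1 x.2
      = ∑ x ∈ (Finset.range N ×ˢ Finset.range N).filter (fun x => x.1 + x.2 < N), h x.1 x.2 := by
    symm
    apply Finset.sum_subset (Finset.filter_subset _ _)
    intro x hx hx2
    simp only [Finset.mem_filter, hx, true_and, not_lt] at hx2
    exact h0 x.1 x.2 hx2
  rw [step1]
  refine Finset.sum_nbij' (i := fun x => (⟨x.1 + x.2, x.1⟩ : (_ : ℕ) × ℕ))
      (j := fun y => ((y.2, y.1 - y.2) : ℕ × ℕ)) ?_ ?_ ?_ ?_ ?_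
  · rintro ⟨k, l⟩ ha
    simp only [Finset.mem_filter, Finset.mem_product, Finset.mem_range] at ha
    simp only [Finset.mem_sigma, Finset.mem_range]
    omega
  · rintro ⟨m, i⟩ hb
    simp only [Finset.mem_sigma, Finset.mem_range] at hb
    dsimp only
    simp only [Finset.mem_filter, Finset.mem_product, Finset.mem_range]
    omega
  · rintro ⟨k, l⟩ ha
    simp only [Finset.mem_filter, Finset.mem_product, Finset.mem_range] at ha
    show (k, k + l - k) = (k, l)
    have e : k + l - k = l := by omega
    rw [e]
  · rintro ⟨m, i⟩ hb
    simp only [Finset.mem_sigma, Finset.mem_range] at hb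
    show (⟨i + (m - i), i⟩ : (_ : ℕ) × ℕ) = ⟨m, i⟩
    have e : i + (m - i) = m := by omega
    rw [e]
  · rintro ⟨k, l⟩ ha
    simp only [Finset.mem_filter, Finset.mem_product, Finset.mem_range] at ha
    show h k l = h k (k + l - k)
    congr 1
    omega

lemma SRep.mul {c e : ℕ → K} {T U : Module.End K (Polynomial K)}
    (hc : SRep K c T) (he : SRep K e U) :
    SRep K (fun m => ∑ i ∈ Finset.range (m+1), c i * e (m - i)) (T * U) := by
  intro p N hN
  have hU : (U p).natDegree < N := lt_of_le_of_lt (he.natDegree_le K p) hN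
  rw [Module.End.mul_apply, hc (U p) N hU]
  have key : ∀ k, (fderivF K ^ k) (U p)
      = ∑ j ∈ Finset.range N, e j • ((fderivF K ^ (k + j)) p) := by
    intro k
    rw [he p N hN, map_sum]
    apply Finset.sum_congr rfl
    intro j _
    rw [map_smul, pow_add, Module.End.mul_apply]
  calc ∑ k ∈ Finset.range N, c k • ((fderivF K ^ k) (U p))
      = ∑ k ∈ Finset.range N, ∑ j ∈ Finset.range N,
          (c k * e j) • ((fderivF K ^ (k + j)) p) := by
        apply Finset.sum_congr rfl
        intro k _
        rw [key k, Finset.smul_sum]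
        apply Finset.sum_congr rfl
        intro j _
        rw [smul_smul]
    _ = ∑ m ∈ Finset.range N, ∑ i ∈ Finset.range (m+1),
          (c i * e (m - i)) • ((fderivF K ^ (i + (m - i))) p) := by
        apply double_sum
        intro k j hkj
        rw [fpow_zero_of_lt K (by omega), smul_zero]
    _ = ∑ m ∈ Finset.range N,
          (∑ i ∈ Finset.range (m+1), c i * e (m - i)) • ((fderivF K ^ m) p) := by
        apply Finset.sum_congr rfl
        intro m _
        rw [Finset.sum_smul]
        apply Finset.sum_congr rfl
        intro i hi
        simp only [Finset.mem_range] at hi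
        have e : i + (m - i) = m := by omega
        rw [e]

lemma SRep.one : SRep K (fun k => if k = 0 then (1:K) else 0) 1 := by
  intro p N hN
  rw [Finset.sum_eq_single 0 (fun k _ hk => by simp [hk])
    (fun h => by simp only [Finset.mem_range] at h; omega)]
  simp

def Qc (e : ℕ → K) : ℕ → ℕ → K
  | 0 => fun j => if j = 0 then 1 else 0
  | (k+1) => fun m => ∑ i ∈ Finset.range (m+1), e i * Qc e k (m - i)

lemma SRep.pow {e : ℕ → K} {Q : Module.End K (Polynomial K)} (he : SRep K e Q) (k : ℕ) :
    SRep K (Qc K e k) (Q ^ k) := by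
  induction k with
  | zero => rw [pow_zero]; exact SRep.one K
  | succ k ih =>
    rw [pow_succ']
    exact SRep.mul K he ih

lemma Qc_vanish {e : ℕ → K} (h0 : e 0 = 0) : ∀ (k j : ℕ), j < k → Qc K e k j = 0 := by
  intro k
  induction k with
  | zero => omega
  | succ k ih =>
    intro j hj
    show ∑ i ∈ Finset.range (j+1), e i * Qc K e k (j - i) = 0
    apply Finset.sum_eq_zero
    intro i hi
    simp only [Finset.mem_range] at hi
    rcases eq_or_ne i 0 with rfl | hne
    · rw [h0, zero_mul]
    · rw [ih (j - i) (by omega), mul_zero]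

lemma fderivF_X : fderivF K (X : Polynomial K) = 1 := by
  rw [← Polynomial.monomial_one_one_eq_X, fderivF_monomial]
  simp

lemma delta_e0 {Q : Module.End K (Polynomial K)} (hQ : DeltaOp K Q) :
    (Q ((X : Polynomial K) ^ 0)).eval 0 / (Ffact 0 : K) = 0 := by
  obtain ⟨c, _, hc⟩ := hQ.2
  have he := shiftInv_SRep K hQ.1
  have h1 : Q (X : Polynomial K) = ∑ k ∈ Finset.range 2,
      ((Q ((X : Polynomial K) ^ k)).eval 0 / (Ffact k : K)) • ((fderivF K ^ k) (X : Polynomial K)) :=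
    he X 2 (by simp)
  rw [hc] at h1
  have h2 := congrArg (fun r => Polynomial.coeff r 1) h1
  simp only [Finset.sum_range_succ, Finset.sum_range_zero, zero_add, pow_zero, pow_one,
    Module.End.one_apply, fderivF_X, coeff_add, coeff_smul, Polynomial.coeff_C,
    Polynomial.coeff_one, Polynomial.coeff_X_one, smul_eq_mul, mul_one, mul_zero] at h2
  simpa using h2.symm

lemma Qpow_q {Q : Module.End K (Polynomial K)} {q : ℕ → Polynomial K} (hq : BasicSeq K Q q) :
    ∀ (k n : ℕ), k ≤ n → (Q ^ k) (q n) = (Gnat n k : K) • q (n - k) := by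
  intro k
  induction k with
  | zero => intro n _; simp [Gnat]
  | succ k ih =>
    intro n hkn
    rw [pow_succ, Module.End.mul_apply, hq.2.2.2 n (by omega), map_smul,
      ih (n-1) (by omega), smul_smul]
    have h2 : Gnat n (k+1) = Nat.fib n * Gnat (n-1) k := by
      unfold Gnat
      rw [Finset.prod_range_succ', Nat.sub_zero, mul_comm]
      congr 1
      apply Finset.prod_congr rfl
      intro i _
      congr 1
      omega
    have e : n - 1 - k = n - (k+1) := by omega
    rw [e, h2]
    push_cast
    rfl

/-- `S^{−1} = Σ_{k≥0} (s_k(0)/F_k!) Q^k`. -/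
theorem inverse_expansion (Q : Module.End K (Polynomial K)) (hQ : DeltaOp K Q)
    (q : ℕ → Polynomial K) (hq : BasicSeq K Q q)
    (S Sinv : Module.End K (Polynomial K)) (hS : ShiftInv K S) (hSinv : ShiftInv K Sinv)
    (hinv : S * Sinv = 1 ∧ Sinv * S = 1)
    (s : ℕ → Polynomial K) (hs : ∀ n : ℕ, s n = Sinv (q n)) :
    ∀ (p : Polynomial K) (N : ℕ), p.natDegree < N →
      Sinv p = ∑ k ∈ Finset.range N, (((s k).eval 0) / (Ffact k : K)) • ((Q ^ k) p) := by
  intro p N hN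
  have hdeg : ∀ n, (q n).natDegree = n := fun n =>
    Polynomial.natDegree_eq_of_degree_eq_some (hq.1 n)
  have hlead : ∀ n, (q n).coeff n ≠ 0 := fun n =>
    Polynomial.coeff_ne_zero_of_eq_degree (hq.1 n)
  set e : ℕ → K := fun k => (Q ((X : Polynomial K) ^ k)).eval 0 / (Ffact k : K) with he_def
  have he : SRep K e Q := shiftInv_SRep K hQ.1
  have he0 : e 0 = 0 := delta_e0 K hQ
  set b : ℕ → K := fun k => (Sinv ((X : Polynomial K) ^ k)).eval 0 / (Ffact k : K) with hb_def
  have hb : SRep K b Sinv := shiftInv_SRep K hSinv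
  set a : ℕ → K := fun k => (s k).eval 0 with ha_def
  set r : ℕ → K := fun j => ∑ k ∈ Finset.range (j+1), (a k / (Ffact k : K)) * Qc K e k j
    with hr_def
  have key : ∀ (f : Polynomial K) (M : ℕ), f.natDegree < M →
      ∑ k ∈ Finset.range M, (a k / (Ffact k : K)) • ((Q ^ k) f)
        = ∑ j ∈ Finset.range M, r j • ((fderivF K ^ j) f) := by
    intro f M h
    calc ∑ k ∈ Finset.range M, (a k / (Ffact k : K)) • ((Q ^ k) f)
        = ∑ k ∈ Finset.range M, ∑ j ∈ Finset.range M,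
            ((a k / (Ffact k : K)) * Qc K e k j) • ((fderivF K ^ j) f) := by
          apply Finset.sum_congr rfl
          intro k _
          rw [SRep.pow K he k f M h, Finset.smul_sum]
          apply Finset.sum_congr rfl
          intro j _
          rw [smul_smul]
      _ = ∑ j ∈ Finset.range M, ∑ k ∈ Finset.range M,
            ((a k / (Ffact k : K)) * Qc K e k j) • ((fderivF K ^ j) f) := Finset.sum_comm
      _ = ∑ j ∈ Finset.range M, r j • ((fderivF K ^ j) f) := by
          apply Finset.sum_congr rfl
          intro j hj
          simp only [Finset.mem_range] at hj
          rw [← Finset.sum_smul]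
          congr 1
          show _ = ∑ k ∈ Finset.range (j+1), (a k / (Ffact k : K)) * Qc K e k j
          symm
          apply Finset.sum_subset (Finset.range_subset_range.mpr (by omega))
          intro k _ hk2
          simp only [Finset.mem_range] at hk2
          rw [Qc_vanish K he0 k j (by omega), mul_zero]
  have hbr : ∀ n, b n = r n := by
    intro n
    induction n using Nat.strong_induction_on with
    | _ n ih =>
    have hdn : (q n).natDegree < n + 1 := by rw [hdeg n]; omega
    have h1 := hb (q n) (n+1) hdn
    have h2 := key (q n) (n+1) hdn
    have h3 : (Sinv (q n)).eval 0 = a n := (congrArg (Polynomial.eval 0) (hs n)).symm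
    have h4 : (∑ k ∈ Finset.range (n+1), (a k / (Ffact k : K)) • ((Q ^ k) (q n))).eval 0
        = a n := by
      rw [Polynomial.eval_finset_sum]
      rw [Finset.sum_eq_single n]
      · rw [Qpow_q K hq n n le_rfl, Nat.sub_self, Gnat_nn, hq.2.1]
        rw [eval_smul, eval_smul, Polynomial.eval_one, smul_eq_mul, smul_eq_mul, mul_one,
          div_mul_cancel₀ _ (Ffact_ne_zero K n)]
      · intro k hk hkn
        simp only [Finset.mem_range] at hk
        rw [Qpow_q K hq k n (by omega), eval_smul, eval_smul,
          hq.2.2.1 (n-k) (by omega), smul_zero, smul_zero]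
      · intro hn
        exact absurd (Finset.self_mem_range_succ n) hn
    have E1 : ∑ j ∈ Finset.range (n+1), b j * ((fderivF K ^ j) (q n)).eval 0 = a n := by
      have h5 := congrArg (Polynomial.eval 0) h1
      rw [Polynomial.eval_finset_sum] at h5
      simp only [eval_smul, smul_eq_mul] at h5
      rw [← h5]
      exact h3
    have E2 : ∑ j ∈ Finset.range (n+1), r j * ((fderivF K ^ j) (q n)).eval 0 = a n := by
      have h5 := congrArg (Polynomial.eval 0) h2
      rw [Polynomial.eval_finset_sum, Polynomial.eval_finset_sum] at h5
      simp only [eval_smul, smul_eq_mul] at h5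
      rw [← h5]
      rw [Polynomial.eval_finset_sum] at h4
      simp only [eval_smul, smul_eq_mul] at h4
      exact h4
    have E3 : ∑ j ∈ Finset.range (n+1), (b j - r j) * ((Ffact j : K) * (q n).coeff j) = 0 := by
      have h6 : ∑ j ∈ Finset.range (n+1),
          (b j * ((fderivF K ^ j) (q n)).eval 0 - r j * ((fderivF K ^ j) (q n)).eval 0) = 0 := by
        rw [Finset.sum_sub_distrib, E1, E2, sub_self]
      rw [← h6]
      apply Finset.sum_congr rfl
      intro j _
      rw [← fpow_eval0, sub_mul]
    rw [Finset.sum_range_succ] at E3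
    have hz : ∑ j ∈ Finset.range n, (b j - r j) * ((Ffact j : K) * (q n).coeff j) = 0 := by
      apply Finset.sum_eq_zero
      intro j hj
      rw [ih j (Finset.mem_range.mp hj), sub_self, zero_mul]
    rw [hz, zero_add] at E3
    rcases mul_eq_zero.mp E3 with h | h
    · exact sub_eq_zero.mp h
    · exact absurd h (mul_ne_zero (Ffact_ne_zero K n) (hlead n))
  show Sinv p = ∑ k ∈ Finset.range N, (a k / (Ffact k : K)) • ((Q ^ k) p)
  rw [key p N hN, hb p N hN]
  exact Finset.sum_congr rfl (fun j _ => by rw [hbr j])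
end

section
/- For every sequence a : ℕ → ℕ, the cobweb poset associated to a has order dimension at most 2: there exist two linear orders L1 and L2 on V_a, each of which is a linear extension of ≤_P, such that for all x, y ∈ V_a one has x ≤_P y if and only if (x ≤_{L1} y and x ≤_{L2} y). -/
/-- The vertex set of the cobweb poset associated to a sequence `a : ℕ → ℕ`:
pairs `(j,s)` with `1 ≤ j ≤ a s`, where `s` (the second coordinate) is the level and
`j` (the first coordinate) is the position within the level. -/
def CobwebV (a : ℕ → ℕ) : Type := {p : ℕ × ℕ // 1 ≤ p.1 ∧ p.1 ≤ a p.2}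

/-- The cobweb partial order: `(j,s) ≤_P (u,v)` iff `s < v`, or (`s = v` and `j = u`). -/
def cobwebLE (a : ℕ → ℕ) (x y : CobwebV a) : Prop :=
  x.val.2 < y.val.2 ∨ (x.val.2 = y.val.2 ∧ x.val.1 = y.val.1)

lemma cobweb_ext {a : ℕ → ℕ} {x y : CobwebV a}
    (h2 : x.val.2 = y.val.2) (h1 : x.val.1 = y.val.1) : x = y := by
  apply Subtype.ext
  exact Prod.ext h1 h2

/-- for every sequence `a : ℕ → ℕ`, the associated cobweb poset has order
dimension at most 2: there are two linear orders on its vertex set, each a linear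
extension of `≤_P`, whose intersection is exactly `≤_P`. -/
theorem cobweb_dim_two (a : ℕ → ℕ) :
    ∃ L1 L2 : CobwebV a → CobwebV a → Prop,
      IsLinearOrder (CobwebV a) L1 ∧ IsLinearOrder (CobwebV a) L2 ∧
      (∀ x y : CobwebV a, cobwebLE a x y → L1 x y) ∧
      (∀ x y : CobwebV a, cobwebLE a x y → L2 x y) ∧
      (∀ x y : CobwebV a, cobwebLE a x y ↔ (L1 x y ∧ L2 x y)) := by
  refine ⟨fun x y => x.val.2 < y.val.2 ∨ (x.val.2 = y.val.2 ∧ x.val.1 ≤ y.val.1),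
          fun x y => x.val.2 < y.val.2 ∨ (x.val.2 = y.val.2 ∧ y.val.1 ≤ x.val.1),
          ?_, ?_, ?_, ?_, ?_⟩
  · exact { refl := fun x => Or.inr ⟨rfl, le_refl _⟩,
            trans := fun x y z hxy hyz => by omega,
            antisymm := fun x y hxy hyx => cobweb_ext (by omega) (by omega),
            total := fun x y => by omega }
  · exact { refl := fun x => Or.inr ⟨rfl, le_refl _⟩,
            trans := fun x y z hxy hyz => by omega,
            antisymm := fun x y hxy hyx => cobweb_ext (by omega) (by omega),
            total := fun x y => by omega }
  · intro x y h; unfold cobwebLE at h; omega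
  · intro x y h; unfold cobwebLE at h; omega
  · intro x y; unfold cobwebLE; omega
end
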